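/- arXiv:1805.02505 — 3 statements merged into one kernel-verified Lean document; each statement's English description precedes it below -/
import Mathlib

section
/- Let S be a nonempty finite alphabet and f_1, …, f_N probability mass functions on S with f_i(x) > 0 for all x and i. Let α̂ ∈ Δ be a maximizer over the simplex Δ of the Jensen–Shannon divergence JSD(α) = H(Σ_i α_i f_i) − Σ_i α_i H(f_i). Then the mixture f* = Σ_i α̂_i f_i minimizes f ↦ max_{1 ≤ i ≤ N} KL(f_i, f) over all probability mass functions f on S, i.e., max_i KL(f_i, f*) ≤ max_i KL(f_i, f) for every probability mass function f on S, and moreover min_f max_i KL(f_i, f) = max_{α ∈ Δ} JSD(α). -/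
open Finset

namespace KLJSDaux

lemma kl_expand {S : Type*} [Fintype S] (p q : S → ℝ) (hp : ∀ x, 0 < p x)
    (hq : ∀ x, 0 < q x) :
    ∑ x, p x * Real.log (p x / q x)
      = (∑ x, p x * Real.log (p x)) - ∑ x, p x * Real.log (q x) := by
  rw [← Finset.sum_sub_distrib]
  exact Finset.sum_congr rfl fun x _ => by
    rw [Real.log_div (hp x).ne' (hq x).ne', mul_sub]

lemma kl_nonneg {S : Type*} [Fintype S] (p q : S → ℝ) (hp : ∀ x, 0 < p x)
    (hq : ∀ x, 0 < q x) (hps : ∑ x, p x = 1) (hqs : ∑ x, q x = 1) :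
    0 ≤ ∑ x, p x * Real.log (p x / q x) := by
  have key : ∀ x : S, p x - q x ≤ p x * Real.log (p x / q x) := by
    intro x
    have h1 : Real.log (q x / p x) ≤ q x / p x - 1 :=
      Real.log_le_sub_one_of_pos (div_pos (hq x) (hp x))
    have h2 : Real.log (p x / q x) = - Real.log (q x / p x) := by
      rw [← Real.log_inv, inv_div]
    have h3 := mul_le_mul_of_nonneg_left h1 (hp x).le
    have hpne := (hp x).ne'
    have h4 : p x * (q x / p x - 1) = q x - p x := by field_simp
    rw [h2, mul_neg]
    linarith [h3.trans_eq h4]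
  calc (0:ℝ) = ∑ x, (p x - q x) := by
        rw [Finset.sum_sub_distrib, hps, hqs, sub_self]
    _ ≤ _ := Finset.sum_le_sum fun x _ => key x

lemma kl_le_chisq {S : Type*} [Fintype S] (p q : S → ℝ) (hp : ∀ x, 0 < p x)
    (hq : ∀ x, 0 < q x) (hps : ∑ x, p x = 1) (hqs : ∑ x, q x = 1) :
    ∑ x, p x * Real.log (p x / q x) ≤ ∑ x, (p x - q x)^2 / q x := by
  have key : ∀ x : S, p x * Real.log (p x / q x) ≤ (p x - q x)^2 / q x + (p x - q x) := by
    intro x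
    have h1 : Real.log (p x / q x) ≤ p x / q x - 1 :=
      Real.log_le_sub_one_of_pos (div_pos (hp x) (hq x))
    have h3 := mul_le_mul_of_nonneg_left h1 (hp x).le
    have hqne := (hq x).ne'
    have h4 : p x * (p x / q x - 1) = (p x - q x)^2 / q x + (p x - q x) := by
      field_simp; ring
    linarith [h3.trans_eq h4]
  calc ∑ x, p x * Real.log (p x / q x)
      ≤ ∑ x, ((p x - q x)^2 / q x + (p x - q x)) := Finset.sum_le_sum fun x _ => key x
    _ = (∑ x, (p x - q x)^2 / q x) + ((∑ x, p x) - ∑ x, q x) := by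
        rw [Finset.sum_add_distrib, Finset.sum_sub_distrib]
    _ = ∑ x, (p x - q x)^2 / q x := by rw [hps, hqs]; ring

lemma sum_mix {S : Type*} [Fintype S] {N : ℕ} (fs : Fin N → S → ℝ)
    (α : Fin N → ℝ) (c : S → ℝ) :
    ∑ i, α i * (∑ x, fs i x * c x) = ∑ x, (∑ i, α i * fs i x) * c x := by
  calc ∑ i, α i * (∑ x, fs i x * c x) = ∑ i, ∑ x, α i * fs i x * c x := by
        simp [Finset.mul_sum, mul_assoc]
    _ = ∑ x, ∑ i, α i * fs i x * c x := Finset.sum_comm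
    _ = ∑ x, (∑ i, α i * fs i x) * c x := by
        exact Finset.sum_congr rfl fun x _ => (Finset.sum_mul ..).symm

lemma expand_weighted {S : Type*} [Fintype S] {N : ℕ} (fs : Fin N → S → ℝ)
    (hfs_pos : ∀ i x, 0 < fs i x) (α : Fin N → ℝ) (r : S → ℝ) (hr : ∀ x, 0 < r x) :
    ∑ i, α i * (∑ x, fs i x * Real.log (fs i x / r x))
      = (∑ i, α i * ∑ x, fs i x * Real.log (fs i x))
        - ∑ x, (∑ i, α i * fs i x) * Real.log (r x) := by
  have h : ∀ i : Fin N,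
      α i * (∑ x, fs i x * Real.log (fs i x / r x))
        = α i * (∑ x, fs i x * Real.log (fs i x)) - α i * (∑ x, fs i x * Real.log (r x)) := by
    intro i
    rw [kl_expand (fs i) r (hfs_pos i) hr, mul_sub]
  rw [Finset.sum_congr rfl fun i _ => h i, Finset.sum_sub_distrib,
    sum_mix fs α (fun x => Real.log (r x))]

lemma comp {S : Type*} [Fintype S] {N : ℕ} (fs : Fin N → S → ℝ)
    (hfs_pos : ∀ i x, 0 < fs i x) (α : Fin N → ℝ) (q : S → ℝ) (hq : ∀ x, 0 < q x)
    (hm : ∀ x, 0 < ∑ i, α i * fs i x) :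
    ∑ i, α i * (∑ x, fs i x * Real.log (fs i x / q x))
      = (∑ i, α i * (∑ x, fs i x * Real.log (fs i x / (∑ j, α j * fs j x))))
        + ∑ x, (∑ i, α i * fs i x) * Real.log ((∑ i, α i * fs i x) / q x) := by
  rw [expand_weighted fs hfs_pos α q hq,
    expand_weighted fs hfs_pos α (fun x => ∑ j, α j * fs j x) hm,
    kl_expand (fun x => ∑ i, α i * fs i x) q hm hq]
  ring

lemma jsd_eq {S : Type*} [Fintype S] {N : ℕ} (fs : Fin N → S → ℝ)
    (hfs_pos : ∀ i x, 0 < fs i x) (α : Fin N → ℝ)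
    (hm : ∀ x, 0 < ∑ i, α i * fs i x) :
    (∑ x, Real.negMulLog (∑ i, α i * fs i x))
        - ∑ i, α i * (∑ x, Real.negMulLog (fs i x))
      = ∑ i, α i * (∑ x, fs i x * Real.log (fs i x / (∑ j, α j * fs j x))) := by
  rw [expand_weighted fs hfs_pos α (fun x => ∑ j, α j * fs j x) hm]
  have h1 : ∑ x, Real.negMulLog (∑ i, α i * fs i x)
      = -∑ x, (∑ i, α i * fs i x) * Real.log (∑ i, α i * fs i x) := by
    simp [Real.negMulLog, neg_mul]
  have h2 : ∑ i, α i * (∑ x, Real.negMulLog (fs i x))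
      = -∑ i, α i * ∑ x, fs i x * Real.log (fs i x) := by
    rw [← Finset.sum_neg_distrib]
    exact Finset.sum_congr rfl fun i _ => by
      simp [Real.negMulLog, neg_mul, mul_neg]
  rw [h1, h2]
  ring

end KLJSDaux

/-- Let `f₁, …, f_N` be everywhere-positive pmfs on a nonempty finite
alphabet `S`, and let `α̂` maximize the Jensen–Shannon divergence
`JSD(α) = H(∑ i, αᵢ fᵢ) − ∑ i, αᵢ H(fᵢ)` over the simplex. Then the mixture
`f* = ∑ i, α̂ᵢ fᵢ` minimizes `f ↦ max_i KL(fᵢ, f)` over all pmfs `f` on `S`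
(positive wherever some `fᵢ` is positive, i.e. everywhere), and
`max_i KL(fᵢ, f*) = JSD(α̂)` (the minimax value equals the max of JSD). -/
theorem kl_center_is_jsd_maximizer
    {S : Type*} [Fintype S] [Nonempty S] {N : ℕ} (hN : 0 < N)
    (fs : Fin N → S → ℝ)
    (hfs_pos : ∀ i x, 0 < fs i x) (hfs_sum : ∀ i, ∑ x, fs i x = 1)
    (αh : Fin N → ℝ) (hαh : αh ∈ stdSimplex ℝ (Fin N))
    (hmax : ∀ α ∈ stdSimplex ℝ (Fin N),
      ((∑ x, Real.negMulLog (∑ i, α i * fs i x))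
          - ∑ i, α i * (∑ x, Real.negMulLog (fs i x))) ≤
      ((∑ x, Real.negMulLog (∑ i, αh i * fs i x))
          - ∑ i, αh i * (∑ x, Real.negMulLog (fs i x)))) :
    (∀ f : S → ℝ, (∀ x, 0 < f x) → (∑ x, f x) = 1 →
      (Finset.univ.sup' ⟨⟨0, hN⟩, Finset.mem_univ _⟩
        fun i => ∑ x, fs i x * Real.log (fs i x / (∑ j, αh j * fs j x))) ≤
      (Finset.univ.sup' ⟨⟨0, hN⟩, Finset.mem_univ _⟩
        fun i => ∑ x, fs i x * Real.log (fs i x / f x))) ∧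
    (Finset.univ.sup' ⟨⟨0, hN⟩, Finset.mem_univ _⟩
        fun i => ∑ x, fs i x * Real.log (fs i x / (∑ j, αh j * fs j x))) =
      ((∑ x, Real.negMulLog (∑ i, αh i * fs i x))
          - ∑ i, αh i * (∑ x, Real.negMulLog (fs i x))) := by
  obtain ⟨hα0, hα1⟩ := hαh
  -- positivity and normalization of the mixture g x = ∑ j, αh j * fs j x
  have hg_pos : ∀ x, 0 < ∑ j, αh j * fs j x := by
    intro x
    apply Finset.sum_pos' (fun i _ => mul_nonneg (hα0 i) (hfs_pos i x).le)
    obtain ⟨i, hi⟩ : ∃ i, 0 < αh i := by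
      by_contra h
      push_neg at h
      have h0 : ∑ i, αh i = 0 :=
        Finset.sum_eq_zero fun i _ => le_antisymm (h i) (hα0 i)
      rw [hα1] at h0; norm_num at h0
    exact ⟨i, Finset.mem_univ i, mul_pos hi (hfs_pos i x)⟩
  have hg_sum : ∑ x, (∑ j, αh j * fs j x) = 1 := by
    rw [Finset.sum_comm]
    calc ∑ j, ∑ x, αh j * fs j x = ∑ j : Fin N, αh j := by
          refine Finset.sum_congr rfl fun j _ => ?_
          rw [← Finset.mul_sum, hfs_sum j, mul_one]
      _ = 1 := hα1
  -- J = JSD(αh) as a weighted sum of KL divergences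
  have hJ : (∑ x, Real.negMulLog (∑ i, αh i * fs i x))
        - ∑ i, αh i * (∑ x, Real.negMulLog (fs i x))
      = ∑ i, αh i * (∑ x, fs i x * Real.log (fs i x / (∑ j, αh j * fs j x))) :=
    KLJSDaux.jsd_eq fs hfs_pos αh hg_pos
  set J : ℝ := (∑ x, Real.negMulLog (∑ i, αh i * fs i x))
      - ∑ i, αh i * (∑ x, Real.negMulLog (fs i x)) with hJdef
  -- Step A: each KL(fᵢ, g) is at most J
  have stepA : ∀ i : Fin N,
      (∑ x, fs i x * Real.log (fs i x / (∑ j, αh j * fs j x))) ≤ J := by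
    intro i
    set Ki : ℝ := ∑ x, fs i x * Real.log (fs i x / (∑ j, αh j * fs j x)) with hKidef
    set C : ℝ := ∑ x, (fs i x - (∑ j, αh j * fs j x))^2 / (∑ j, αh j * fs j x) with hCdef
    have key : ∀ t : ℝ, 0 < t → t ≤ 1 → Ki - J ≤ t * C := by
      intro t ht0 ht1
      set β : Fin N → ℝ := fun j => (1 - t) * αh j + t * (if j = i then 1 else 0) with hβdef
      have hβ0 : ∀ j, 0 ≤ β j := by
        intro j
        apply add_nonneg (mul_nonneg (by linarith) (hα0 j))
        apply mul_nonneg ht0.le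
        split <;> norm_num
      have hβ1 : ∑ j, β j = 1 := by
        simp only [hβdef]
        rw [Finset.sum_add_distrib, ← Finset.mul_sum, ← Finset.mul_sum, hα1,
          Finset.sum_ite_eq' Finset.univ i (fun _ => (1:ℝ))]
        simp
      have hmix : ∀ x, (∑ j, β j * fs j x)
          = (1 - t) * (∑ j, αh j * fs j x) + t * fs i x := by
        intro x
        calc ∑ j, β j * fs j x
            = ∑ j, ((1 - t) * (αh j * fs j x) + t * (if j = i then fs j x else 0)) := by
              refine Finset.sum_congr rfl fun j _ => ?_
              by_cases h : j = i <;> simp [hβdef, h] <;> ring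
          _ = (1 - t) * (∑ j, αh j * fs j x) + t * fs i x := by
              rw [Finset.sum_add_distrib, ← Finset.mul_sum, ← Finset.mul_sum,
                Finset.sum_ite_eq' Finset.univ i (fun j => fs j x)]
              simp
      have hm_pos : ∀ x, 0 < ∑ j, β j * fs j x := by
        intro x
        rw [hmix x]
        exact add_pos_of_nonneg_of_pos
          (mul_nonneg (by linarith) (hg_pos x).le) (mul_pos ht0 (hfs_pos i x))
      have hm_sum : ∑ x, (∑ j, β j * fs j x) = 1 := by
        rw [Finset.sum_congr rfl fun x _ => hmix x, Finset.sum_add_distrib,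
          ← Finset.mul_sum, ← Finset.mul_sum, hg_sum, hfs_sum i]
        ring
      -- maximality of αh
      have h1 := hmax β ⟨hβ0, hβ1⟩
      -- JSD(β) as weighted KL
      have h2 := KLJSDaux.jsd_eq fs hfs_pos β hm_pos
      -- compensation identity with weights β, reference g
      have h3 := KLJSDaux.comp fs hfs_pos β (fun x => ∑ j, αh j * fs j x) hg_pos hm_pos
      -- decomposition of ∑ β KL(·,g)
      have h4 : ∑ j, β j * (∑ x, fs j x * Real.log (fs j x / (∑ j', αh j' * fs j' x)))
          = (1 - t) * (∑ j, αh j * (∑ x, fs j x * Real.log (fs j x / (∑ j', αh j' * fs j' x))))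
            + t * Ki := by
        have hterm : ∀ j : Fin N,
            β j * (∑ x, fs j x * Real.log (fs j x / (∑ j', αh j' * fs j' x)))
              = (1 - t) * (αh j * (∑ x, fs j x * Real.log (fs j x / (∑ j', αh j' * fs j' x))))
                + (if j = i then
                    t * (∑ x, fs j x * Real.log (fs j x / (∑ j', αh j' * fs j' x))) else 0) := by
          intro j
          by_cases h : j = i <;> simp [hβdef, h] <;> ring
        rw [Finset.sum_congr rfl fun j _ => hterm j, Finset.sum_add_distrib,
          ← Finset.mul_sum,
          Finset.sum_ite_eq' Finset.univ i
            (fun j => t * (∑ x, fs j x * Real.log (fs j x / (∑ j', αh j' * fs j' x))))]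
        simp [hKidef]
      -- chi-square bound on KL(m_β, g)
      have h5 : ∑ x, (∑ j, β j * fs j x) * Real.log ((∑ j, β j * fs j x) / (∑ j, αh j * fs j x))
          ≤ t^2 * C := by
        have hcs := KLJSDaux.kl_le_chisq (fun x => ∑ j, β j * fs j x)
          (fun x => ∑ j, αh j * fs j x) hm_pos hg_pos hm_sum hg_sum
        refine hcs.trans (le_of_eq ?_)
        rw [hCdef, Finset.mul_sum]
        refine Finset.sum_congr rfl fun x _ => ?_
        rw [hmix x]
        have hgne := (hg_pos x).ne'
        field_simp
        ring
      -- combine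
      have hJK : J = ∑ j, αh j * (∑ x, fs j x * Real.log (fs j x / (∑ j', αh j' * fs j' x))) := hJ
      rw [h2] at h1
      rw [h4] at h3
      have hineq : (1 - t) * J + t * Ki ≤ J + t^2 * C := by
        rw [hJK]
        linarith [h3, h1, h5]
      have ht2 : t * (Ki - J) ≤ t * (t * C) := by nlinarith [hineq]
      have := le_of_mul_le_mul_left ht2 ht0
      linarith
    by_contra hcon
    push_neg at hcon
    have hc : 0 < Ki - J := by linarith
    have hC1 : Ki - J ≤ C := by simpa using key 1 one_pos le_rfl
    have hCpos : 0 < C := lt_of_lt_of_le hc hC1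
    have ht0 : 0 < (Ki - J) / (2 * C) := by positivity
    have ht1 : (Ki - J) / (2 * C) ≤ 1 := by
      rw [div_le_one (by positivity)]
      linarith
    have hkey := key _ ht0 ht1
    have hCne : C ≠ 0 := hCpos.ne'
    have hh : (Ki - J) / (2 * C) * C = (Ki - J) / 2 := by
      field_simp
    rw [hh] at hkey
    linarith
  -- the sup equals J
  have hne : (Finset.univ : Finset (Fin N)).Nonempty := ⟨⟨0, hN⟩, Finset.mem_univ _⟩
  have hsup_le : (Finset.univ.sup' ⟨⟨0, hN⟩, Finset.mem_univ _⟩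
      fun i => ∑ x, fs i x * Real.log (fs i x / (∑ j, αh j * fs j x))) ≤ J :=
    Finset.sup'_le _ _ fun i _ => stepA i
  have hJ_le_sup : ∀ (f : S → ℝ),
      J ≤ ∑ i, αh i * (∑ x, fs i x * Real.log (fs i x / (∑ j, αh j * fs j x))) := by
    intro f; rw [hJ]
  have sum_le_sup : ∀ (f : S → ℝ),
      ∑ i, αh i * (∑ x, fs i x * Real.log (fs i x / f x))
        ≤ Finset.univ.sup' ⟨⟨0, hN⟩, Finset.mem_univ _⟩
            (fun i => ∑ x, fs i x * Real.log (fs i x / f x)) := by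
    intro f
    calc ∑ i, αh i * (∑ x, fs i x * Real.log (fs i x / f x))
        ≤ ∑ i, αh i * (Finset.univ.sup' ⟨⟨0, hN⟩, Finset.mem_univ _⟩
            (fun i => ∑ x, fs i x * Real.log (fs i x / f x))) := by
          refine Finset.sum_le_sum fun i _ => mul_le_mul_of_nonneg_left ?_ (hα0 i)
          exact Finset.le_sup' (fun i => ∑ x, fs i x * Real.log (fs i x / f x))
            (Finset.mem_univ i)
      _ = _ := by rw [← Finset.sum_mul, hα1, one_mul]
  have hsup_eq : (Finset.univ.sup' ⟨⟨0, hN⟩, Finset.mem_univ _⟩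
      fun i => ∑ x, fs i x * Real.log (fs i x / (∑ j, αh j * fs j x))) = J := by
    refine le_antisymm hsup_le ?_
    rw [hJ]
    exact sum_le_sup (fun x => ∑ j, αh j * fs j x)
  refine ⟨?_, hsup_eq⟩
  intro f hf_pos hf_sum
  rw [hsup_eq]
  have hcomp := KLJSDaux.comp fs hfs_pos αh f hf_pos hg_pos
  have hkl := KLJSDaux.kl_nonneg (fun x => ∑ j, αh j * fs j x) f hg_pos hf_pos hg_sum hf_sum
  have : J ≤ ∑ i, αh i * (∑ x, fs i x * Real.log (fs i x / f x)) := by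
    rw [hcomp, hJ]
    linarith [hkl]
  exact this.trans (sum_le_sup f)
end

section
/- Let X_1, …, X_N be n×n real symmetric positive definite matrices and w_1, …, w_N > 0. Define A = (Σ_j w_j)^{-1} Σ_i w_i X_i and B = (Σ_j w_j)^{-1} Σ_i w_i X_i^{-1}, and let M = (B^{-1})^{1/2} ((B^{1/2} A B^{1/2})^{1/2}) (B^{-1})^{1/2}. Then M minimizes the weighted sum of symmetrized KL divergences Σ_{i=1}^N w_i J(X_i, Y) over all n×n symmetric positive definite matrices Y, where J(X, Y) = (1/4)(tr(X^{-1} Y) + tr(Y^{-1} X) − 2n). -/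
/-!
Averaging the divergences turns the objective into `(∑ w / 4) (tr (B Y) + tr (Y⁻¹ A) - 2n)`.
Substituting `S = B^{1/2} Y B^{1/2}` and `E = (B^{1/2} A B^{1/2})^{1/2}` this is
`tr S + tr (S⁻¹ E²)`, which exceeds `2 tr E` by `tr ((S - E) S⁻¹ (S - E)) ≥ 0`; the bound is
attained at `S = E`, i.e. at `Y = M`.
-/

open Matrix

lemma smul_inv_smul_sum_of_nonneg {𝕜 M ι : Type*} [Field 𝕜] [LinearOrder 𝕜]
    [IsStrictOrderedRing 𝕜] [AddCommGroup M] [Module 𝕜 M] {s : Finset ι} {w : ι → 𝕜}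
    (hw : ∀ i ∈ s, 0 ≤ w i) (P : ι → M) :
    (∑ i ∈ s, w i) • (∑ i ∈ s, w i)⁻¹ • ∑ i ∈ s, w i • P i = ∑ i ∈ s, w i • P i := by
  by_cases hW : ∑ i ∈ s, w i = 0
  · rw [Finset.sum_eq_zero_iff_of_nonneg hw] at hW
    have hsum : ∑ i ∈ s, w i • P i = 0 := Finset.sum_eq_zero fun i hi => by rw [hW i hi, zero_smul]
    simp [hsum]
  · exact smul_inv_smul₀ hW _

namespace Matrix

variable {m : Type*} [Fintype m] [DecidableEq m]

lemma sum_mul_trace_mul_left {R ι : Type*} [CommRing R] (s : Finset ι) (w : ι → R)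
    (P : ι → Matrix m m R) (Z : Matrix m m R) :
    ∑ i ∈ s, w i * (P i * Z).trace = ((∑ i ∈ s, w i • P i) * Z).trace := by
  simp [Finset.sum_mul, trace_sum, trace_smul]

lemma sum_mul_trace_mul_right {R ι : Type*} [CommRing R] (s : Finset ι) (w : ι → R)
    (P : ι → Matrix m m R) (Z : Matrix m m R) :
    ∑ i ∈ s, w i * (Z * P i).trace = (Z * ∑ i ∈ s, w i • P i).trace := by
  simp [Finset.mul_sum, trace_sum, trace_smul]

lemma sum_mul_trace_inv_mul_add_trace_inv_mul_sub {ι : Type*} (s : Finset ι) (w : ι → ℝ)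
    (X : ι → Matrix m m ℝ) (Z : Matrix m m ℝ) (c : ℝ) :
    ∑ i ∈ s, w i * (((X i)⁻¹ * Z).trace + (Z⁻¹ * X i).trace - c) =
      ((∑ i ∈ s, w i • (X i)⁻¹) * Z).trace + (Z⁻¹ * ∑ i ∈ s, w i • X i).trace
        - (∑ i ∈ s, w i) * c := by
  rw [← sum_mul_trace_mul_left, ← sum_mul_trace_mul_right, Finset.sum_mul,
    ← Finset.sum_add_distrib, ← Finset.sum_sub_distrib]
  exact Finset.sum_congr rfl fun i _ => by ring

open MatrixOrder in
lemma PosDef.eq_inv_of_mul_self_eq_inv {C D : Matrix m m ℝ} (hC : C.PosDef) (hD : D.PosDef)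
    (h : C * C = (D * D)⁻¹) : C = D⁻¹ := by
  refine (CFC.sq_eq_sq_iff C D⁻¹ hC.posSemidef.nonneg hD.inv.posSemidef.nonneg).mp ?_
  rw [sq, sq, h, mul_inv_rev]

lemma PosDef.two_trace_le_trace_add_trace_inv_mul {S E : Matrix m m ℝ} (hS : S.PosDef)
    (hE : E.IsHermitian) : 2 * E.trace ≤ S.trace + (S⁻¹ * (E * E)).trace := by
  have hSu : IsUnit S.det := hS.det_pos.ne'.isUnit
  have hsq : (S - E)ᴴ * S⁻¹ * (S - E) = S - E - E + E * S⁻¹ * E := by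
    rw [(hS.isHermitian.sub hE).eq]
    calc (S - E) * S⁻¹ * (S - E)
        = S * S⁻¹ * S - S * S⁻¹ * E - E * (S⁻¹ * S) + E * S⁻¹ * E := by noncomm_ring
      _ = S - E - E + E * S⁻¹ * E := by
        rw [mul_nonsing_inv S hSu, nonsing_inv_mul S hSu, Matrix.one_mul, Matrix.one_mul,
          Matrix.mul_one]
  have hnonneg := (hS.inv.posSemidef.conjTranspose_mul_mul_same (S - E)).trace_nonneg
  rw [hsq, trace_add, trace_sub, trace_sub, trace_mul_cycle, trace_mul_comm] at hnonneg
  linarith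

lemma trace_mul_add_trace_inv_mul_eq_two_trace {R : Type*} [CommRing R] {A D E : Matrix m m R}
    (hD : IsUnit D.det) (hE : IsUnit E.det) (hE2 : E * E = D * A * D) :
    (D * D * (D⁻¹ * E * D⁻¹)).trace + ((D⁻¹ * E * D⁻¹)⁻¹ * A).trace = 2 * E.trace := by
  have hM : D * D * (D⁻¹ * E * D⁻¹) = D * E * D⁻¹ := by simp [Matrix.mul_assoc, hD]
  have hMinv : (D⁻¹ * E * D⁻¹)⁻¹ = D * E⁻¹ * D := by
    rw [mul_inv_rev, mul_inv_rev, nonsing_inv_nonsing_inv D hD, Matrix.mul_assoc]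
  have hMA : (D * E⁻¹ * D * A).trace = (E⁻¹ * (E * E)).trace := by
    rw [hE2, Matrix.mul_assoc D, Matrix.mul_assoc D, trace_mul_comm D]
    simp only [Matrix.mul_assoc]
  rw [hM, hMinv, trace_mul_cycle, nonsing_inv_mul D hD, Matrix.one_mul, hMA,
    nonsing_inv_mul_cancel_left E E hE]
  ring

lemma two_trace_le_trace_mul_add_trace_inv_mul {A D E Y : Matrix m m ℝ} (hD : D.IsHermitian)
    (hDu : IsUnit D.det) (hE : E.IsHermitian) (hE2 : E * E = D * A * D) (hY : Y.PosDef) :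
    2 * E.trace ≤ (D * D * Y).trace + (Y⁻¹ * A).trace := by
  have hS : (D * Y * D).PosDef := by
    have := hY.conjTranspose_mul_mul_same (B := D) (mulVec_injective_iff_isUnit.mpr
      ((isUnit_iff_isUnit_det D).mpr hDu))
    rwa [hD.eq] at this
  have hYinv : Y⁻¹ = D * (D * Y * D)⁻¹ * D := by
    rw [mul_inv_rev, mul_inv_rev]
    simp only [Matrix.mul_assoc]
    rw [nonsing_inv_mul D hDu, Matrix.mul_one, mul_nonsing_inv_cancel_left D _ hDu]
  have hBY : (D * D * Y).trace = (D * Y * D).trace := by rw [Matrix.mul_assoc, trace_mul_comm D]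
  have hYA : (Y⁻¹ * A).trace = ((D * Y * D)⁻¹ * (E * E)).trace := by
    rw [hYinv, hE2, Matrix.mul_assoc D, Matrix.mul_assoc D, trace_mul_comm D]
    simp only [Matrix.mul_assoc]
  rw [hBY, hYA]
  exact hS.two_trace_le_trace_add_trace_inv_mul hE

end Matrix

theorem weighted_symmetrized_kl_center_spd_general
    {n N : ℕ}
    (X : Fin N → Matrix (Fin n) (Fin n) ℝ)
    (w : Fin N → ℝ) (hw : ∀ i, 0 < w i)
    (A B : Matrix (Fin n) (Fin n) ℝ)
    (hAdef : A = (∑ j, w j)⁻¹ • ∑ i, w i • X i)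
    (hBdef : B = (∑ j, w j)⁻¹ • ∑ i, w i • (X i)⁻¹)
    (C : Matrix (Fin n) (Fin n) ℝ) (hC : C.PosDef) (hC2 : C * C = B⁻¹)
    (D : Matrix (Fin n) (Fin n) ℝ) (hD : D.PosDef) (hD2 : D * D = B)
    (E : Matrix (Fin n) (Fin n) ℝ) (hE : E.PosDef) (hE2 : E * E = D * A * D) :
    ∀ Y : Matrix (Fin n) (Fin n) ℝ, Y.PosDef →
      (∑ i, w i * ((1 / 4 : ℝ) *
          (((X i)⁻¹ * (C * E * C)).trace + ((C * E * C)⁻¹ * X i).trace - 2 * n))) ≤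
        ∑ i, w i * ((1 / 4 : ℝ) *
          (((X i)⁻¹ * Y).trace + (Y⁻¹ * X i).trace - 2 * n)) := by
  intro Y hY
  have hw0 : ∀ i ∈ Finset.univ, 0 ≤ w i := fun i _ => (hw i).le
  have hA : ∑ i, w i • X i = (∑ j, w j) • A := by rw [hAdef, smul_inv_smul_sum_of_nonneg hw0]
  have hB : ∑ i, w i • (X i)⁻¹ = (∑ j, w j) • B := by rw [hBdef, smul_inv_smul_sum_of_nonneg hw0]
  have hobjective : ∀ Z : Matrix (Fin n) (Fin n) ℝ,
      ∑ i, w i * ((1 / 4 : ℝ) * (((X i)⁻¹ * Z).trace + (Z⁻¹ * X i).trace - 2 * n)) =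
        (1 / 4 : ℝ) * ((∑ j, w j) * ((B * Z).trace + (Z⁻¹ * A).trace - 2 * n)) := fun Z => by
    simp_rw [mul_left_comm (w _) (1 / 4 : ℝ)]
    rw [← Finset.mul_sum, sum_mul_trace_inv_mul_add_trace_inv_mul_sub, hA, hB, smul_mul,
      Matrix.mul_smul, trace_smul, trace_smul, smul_eq_mul, smul_eq_mul]
    ring
  have hDu : IsUnit D.det := hD.det_pos.ne'.isUnit
  have hCD : C = D⁻¹ := hC.eq_inv_of_mul_self_eq_inv hD (by rw [hC2, hD2])
  have hreduced : (B * (C * E * C)).trace + ((C * E * C)⁻¹ * A).trace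
      ≤ (B * Y).trace + (Y⁻¹ * A).trace := by
    rw [hCD, ← hD2, trace_mul_add_trace_inv_mul_eq_two_trace hDu hE.det_pos.ne'.isUnit hE2]
    exact two_trace_le_trace_mul_add_trace_inv_mul hD.isHermitian hDu hE.isHermitian hE2 hY
  rw [hobjective, hobjective]
  have := mul_le_mul_of_nonneg_left hreduced (Finset.sum_nonneg hw0)
  linarith

/-- Let `X₁, …, X_N` be `n×n` real SPD matrices with positive weights
`w₁, …, w_N`. With `A = (∑ w)⁻¹ ∑ wᵢ Xᵢ`, `B = (∑ w)⁻¹ ∑ wᵢ Xᵢ⁻¹`, and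
`M = (B⁻¹)^{1/2} ((B^{1/2} A B^{1/2})^{1/2}) (B⁻¹)^{1/2}` (square roots encoded via
their defining property as the unique SPD square roots: `C * C = B⁻¹`, `D * D = B`,
`E * E = D * A * D`, so `M = C * E * C`), the matrix `M` minimizes the weighted sum of
symmetrized KL divergences `Y ↦ ∑ i, wᵢ J(Xᵢ, Y)` over SPD `Y`, where
`J(X, Y) = (1/4)(tr(X⁻¹ Y) + tr(Y⁻¹ X) − 2n)`. -/
theorem weighted_symmetrized_kl_center_spd
    {n N : ℕ} (hN : 0 < N)
    (X : Fin N → Matrix (Fin n) (Fin n) ℝ) (hX : ∀ i, (X i).PosDef)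
    (w : Fin N → ℝ) (hw : ∀ i, 0 < w i)
    (A B : Matrix (Fin n) (Fin n) ℝ)
    (hAdef : A = (∑ j, w j)⁻¹ • ∑ i, w i • X i)
    (hBdef : B = (∑ j, w j)⁻¹ • ∑ i, w i • (X i)⁻¹)
    (C : Matrix (Fin n) (Fin n) ℝ) (hC : C.PosDef) (hC2 : C * C = B⁻¹)
    (D : Matrix (Fin n) (Fin n) ℝ) (hD : D.PosDef) (hD2 : D * D = B)
    (E : Matrix (Fin n) (Fin n) ℝ) (hE : E.PosDef) (hE2 : E * E = D * A * D) :
    ∀ Y : Matrix (Fin n) (Fin n) ℝ, Y.PosDef →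
      (∑ i, w i * ((1 / 4 : ℝ) *
          (((X i)⁻¹ * (C * E * C)).trace + ((C * E * C)⁻¹ * X i).trace - 2 * n))) ≤
        ∑ i, w i * ((1 / 4 : ℝ) *
          (((X i)⁻¹ * Y).trace + (Y⁻¹ * X i).trace - 2 * n)) :=
  weighted_symmetrized_kl_center_spd_general X w hw A B hAdef hBdef C hC hC2 D hD hD2 E hE hE2
end

section
/- Let A and B be n×n real symmetric positive definite matrices. Then the function Y ↦ tr(B Y) + tr(Y^{-1} A), defined on the set of n×n real symmetric positive definite matrices, attains its minimum at Y = M, where M = (B^{-1})^{1/2} ((B^{1/2} A B^{1/2})^{1/2}) (B^{-1})^{1/2}; that is, for every symmetric positive definite Y, tr(B Y) + tr(Y^{-1} A) ≥ tr(B M) + tr(M^{-1} A). -/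
open Matrix
open scoped MatrixOrder ComplexOrder

/-!
With `D = B^{1/2}`, uniqueness of positive square roots gives `C = D⁻¹`, so `M = D⁻¹ E D⁻¹`
and both `tr(B M)` and `tr(M⁻¹ A)` equal `tr E`. For any positive definite `Y`, the matrix AM-GM
inequality `2 tr(Fᵀ G) ≤ tr(Fᵀ Y F) + tr(Gᵀ Y⁻¹ G)`, which is `tr(Hᵀ Y H) ≥ 0` for
`H = F - Y⁻¹ G`, applied to `F = D` and `G = D⁻¹ E` reads `2 tr E ≤ tr(B Y) + tr(Y⁻¹ A)`.
-/

variable {m k : Type*} [Fintype m] [DecidableEq m]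

theorem two_mul_trace_transpose_mul_le [Fintype k] {Y : Matrix m m ℝ} (hY : Y.PosDef)
    (F G : Matrix m k ℝ) :
    2 * (Fᵀ * G).trace ≤ (Fᵀ * Y * F).trace + (Gᵀ * Y⁻¹ * G).trace := by
  have hdet : IsUnit Y.det := Y.isUnit_iff_isUnit_det.mp hY.isUnit
  have hYinvT : (Y⁻¹)ᵀ = Y⁻¹ := (isHermitian_iff_isSymm.mp hY.inv.isHermitian).eq
  have hsq : 0 ≤ ((F - Y⁻¹ * G)ᵀ * Y * (F - Y⁻¹ * G)).trace := by
    simpa only [conjTranspose_eq_transpose_of_trivial] using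
      (hY.posSemidef.conjTranspose_mul_mul_same (F - Y⁻¹ * G)).trace_nonneg
  have hexpand : (F - Y⁻¹ * G)ᵀ * Y * (F - Y⁻¹ * G) =
      Fᵀ * Y * F - Fᵀ * G - Gᵀ * F + Gᵀ * Y⁻¹ * G := by
    simp only [transpose_sub, transpose_mul, hYinvT, Matrix.sub_mul, Matrix.mul_sub,
      Matrix.mul_assoc, mul_nonsing_inv_cancel_left _ _ hdet, nonsing_inv_mul_cancel_left _ _ hdet]
    abel
  have hsymm : (Gᵀ * F).trace = (Fᵀ * G).trace := by
    rw [← trace_transpose, transpose_mul, transpose_transpose]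
  rw [hexpand, trace_add, trace_sub, trace_sub, hsymm] at hsq
  linarith

theorem Matrix.PosDef.eq_inv_of_mul_self_eq_inv_s14 {𝕜 : Type*} [RCLike 𝕜] {C D : Matrix m m 𝕜}
    (hC : C.PosDef) (hD : D.PosDef) (h : C * C = (D * D)⁻¹) : C = D⁻¹ := by
  refine (CFC.sq_eq_sq_iff C D⁻¹ hC.posSemidef.nonneg hD.inv.posSemidef.nonneg).mp ?_
  rw [sq, sq, h, Matrix.mul_inv_rev]

theorem trace_mul_add_trace_inv_mul_eq_two_mul_trace {R : Type*} [CommRing R]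
    {A D E : Matrix m m R} (hD : IsUnit D.det) (hE : IsUnit E.det) (hE2 : E * E = D * A * D) :
    (D * D * (D⁻¹ * E * D⁻¹)).trace + ((D⁻¹ * E * D⁻¹)⁻¹ * A).trace = 2 * E.trace := by
  have hfirst : (D * D * (D⁻¹ * E * D⁻¹)).trace = E.trace := by
    rw [Matrix.mul_assoc, Matrix.mul_assoc, mul_nonsing_inv_cancel_left _ _ hD, trace_mul_comm,
      nonsing_inv_mul_cancel_right _ _ hD]
  have hsecond : ((D⁻¹ * E * D⁻¹)⁻¹ * A).trace = E.trace := by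
    rw [Matrix.mul_inv_rev, Matrix.mul_inv_rev, nonsing_inv_nonsing_inv D hD, Matrix.mul_assoc,
      Matrix.mul_assoc, trace_mul_comm, Matrix.mul_assoc, ← hE2,
      nonsing_inv_mul_cancel_left _ _ hE]
  rw [hfirst, hsecond, two_mul]

theorem trace_functional_min_at_kl_center_general
    {n : ℕ} (A B : Matrix (Fin n) (Fin n) ℝ)
    (C : Matrix (Fin n) (Fin n) ℝ) (hC : C.PosDef) (hC2 : C * C = B⁻¹)
    (D : Matrix (Fin n) (Fin n) ℝ) (hD : D.PosDef) (hD2 : D * D = B)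
    (E : Matrix (Fin n) (Fin n) ℝ) (hE : E.PosDef) (hE2 : E * E = D * A * D) :
    ∀ Y : Matrix (Fin n) (Fin n) ℝ, Y.PosDef →
      (B * (C * E * C)).trace + ((C * E * C)⁻¹ * A).trace ≤
        (B * Y).trace + (Y⁻¹ * A).trace := by
  intro Y hY
  subst hD2
  obtain rfl : C = D⁻¹ := hC.eq_inv_of_mul_self_eq_inv_s14 hD hC2
  have hDdet : IsUnit D.det := D.isUnit_iff_isUnit_det.mp hD.isUnit
  have hDT : Dᵀ = D := (isHermitian_iff_isSymm.mp hD.isHermitian).eq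
  have hET : Eᵀ = E := (isHermitian_iff_isSymm.mp hE.isHermitian).eq
  have hEE : D⁻¹ * E * (E * D⁻¹) = A := by
    rw [← Matrix.mul_assoc, Matrix.mul_assoc D⁻¹, hE2, Matrix.mul_assoc, Matrix.mul_assoc,
      mul_nonsing_inv _ hDdet, Matrix.mul_one, nonsing_inv_mul_cancel_left _ _ hDdet]
  rw [trace_mul_add_trace_inv_mul_eq_two_mul_trace hDdet
    (E.isUnit_iff_isUnit_det.mp hE.isUnit) hE2]
  calc 2 * E.trace = 2 * (Dᵀ * (D⁻¹ * E)).trace := by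
        rw [hDT, mul_nonsing_inv_cancel_left _ _ hDdet]
    _ ≤ (Dᵀ * Y * D).trace + ((D⁻¹ * E)ᵀ * Y⁻¹ * (D⁻¹ * E)).trace :=
        two_mul_trace_transpose_mul_le hY D (D⁻¹ * E)
    _ = (D * D * Y).trace + (Y⁻¹ * A).trace := by
        rw [hDT, trace_mul_cycle D Y D, transpose_mul, hET, transpose_nonsing_inv, hDT,
          trace_mul_comm _ (D⁻¹ * E), ← hEE, trace_mul_comm Y⁻¹]
        simp only [Matrix.mul_assoc]

/-- For `n×n` real SPD matrices `A, B`, the function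
`Y ↦ tr(B Y) + tr(Y⁻¹ A)` on SPD matrices attains its minimum at
`M = (B⁻¹)^{1/2} ((B^{1/2} A B^{1/2})^{1/2}) (B⁻¹)^{1/2}` (square roots encoded via
their defining property as the unique SPD square roots: `C * C = B⁻¹`, `D * D = B`,
`E * E = D * A * D`, so `M = C * E * C`): for every SPD `Y`,
`tr(B M) + tr(M⁻¹ A) ≤ tr(B Y) + tr(Y⁻¹ A)`. -/
theorem trace_functional_min_at_kl_center
    {n : ℕ} (A B : Matrix (Fin n) (Fin n) ℝ)
    (hA : A.PosDef) (hB : B.PosDef)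
    (C : Matrix (Fin n) (Fin n) ℝ) (hC : C.PosDef) (hC2 : C * C = B⁻¹)
    (D : Matrix (Fin n) (Fin n) ℝ) (hD : D.PosDef) (hD2 : D * D = B)
    (E : Matrix (Fin n) (Fin n) ℝ) (hE : E.PosDef) (hE2 : E * E = D * A * D) :
    ∀ Y : Matrix (Fin n) (Fin n) ℝ, Y.PosDef →
      (B * (C * E * C)).trace + ((C * E * C)⁻¹ * A).trace ≤
        (B * Y).trace + (Y⁻¹ * A).trace :=
  trace_functional_min_at_kl_center_general A B C hC hC2 D hD hD2 E hE hE2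
end
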